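/- The category of sheaves of abelian groups on a topological space has enough injectives: every sheaf of abelian groups embeds into an injective sheaf. -/

import Mathlib

open CategoryTheory

/-- The category of sheaves of abelian groups on a topological space has enough
injectives. -/
theorem stmt_10 (X : TopCat.{u}) :
    EnoughInjectives (TopCat.Sheaf AddCommGrpCat.{u} X) :=
  have : IsGrothendieckAbelian.{u} (TopCat.Sheaf AddCommGrpCat.{u} X) := inferInstance
  IsGrothendieckAbelian.enoughInjectives
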